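/- arXiv:1608.06996 — 3 statements merged into one kernel-verified Lean document; each statement's English description precedes it below -/
import Mathlib

section
/- Let M, G ⊆ ℕ₀^d be nonempty misère vector subtraction games, and suppose both limit games M^∞ and G^∞ under the misère ★-operator exist. Then M^∞ = G^∞ if and only if min(M) = min(G) (the sets of minimal elements coincide). -/
/-- `x` is a terminal position of the subtraction game with move set `M`:
no move `m ∈ M` satisfies `m ≤ x`. -/
def Terminal {α : Type*} [PartialOrder α] [Sub α] (M : Set α) (x : α) : Prop :=
  ∀ m ∈ M, ¬ m ≤ x

/-- The set of terminal positions `T_M`. -/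
def Tset {α : Type*} [PartialOrder α] [Sub α] (M : Set α) : Set α :=
  {x | Terminal M x}

/-- Misère-play P-positions of a vector subtraction game, by well-founded recursion:
`x` is a P-position iff it has at least one option, and every option `x - m` is an
N-position, i.e. is terminal or has an option `x - m - m'` that is a P-position.
(The guard `x - m - m' < x` is automatic when `0 ∉ M`; when `0 ∈ M` the game is drawn
everywhere and this definition correctly yields no P-positions.) -/
def IsP {α : Type*} [PartialOrder α] [Sub α] [WellFoundedLT α] (M : Set α) : α → Prop :=
  (wellFounded_lt (α := α)).fix fun x rec =>
    (∃ m ∈ M, m ≤ x) ∧ ∀ m ∈ M, m ≤ x →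
      (Terminal M (x - m) ∨
        ∃ m' ∈ M, m' ≤ x - m ∧ ∃ h : x - m - m' < x, rec (x - m - m') h)

/-- The set of misère P-positions (this is also the `★`-operator `M ↦ M★`). -/
def Pset {α : Type*} [PartialOrder α] [Sub α] [WellFoundedLT α] (M : Set α) : Set α :=
  {x | IsP M x}

/-- `x` is a misère N-position: terminal, or has an option that is a P-position. -/
def IsN {α : Type*} [PartialOrder α] [Sub α] [WellFoundedLT α] (M : Set α) (x : α) : Prop :=
  Terminal M x ∨ ∃ m ∈ M, m ≤ x ∧ IsP M (x - m)

/-- The set of misère N-positions. -/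
def Nset {α : Type*} [PartialOrder α] [Sub α] [WellFoundedLT α] (M : Set α) : Set α :=
  {x | IsN M x}

/-- The set of minimal elements of `M`. -/
def minSet {α : Type*} [PartialOrder α] (M : Set α) : Set α :=
  {m ∈ M | ∀ m' ∈ M, m' ≤ m → m' = m}

/-- Pointwise convergence of the iterates of the `★`-operator to the set `L`. -/
def LimitsTo {α : Type*} [PartialOrder α] [Sub α] [WellFoundedLT α] (M L : Set α) : Prop :=
  ∀ x : α, ∃ N : ℕ, ∀ i ≥ N, (x ∈ Pset^[i] M ↔ x ∈ L)

/-- The one-dimensional reflexive games `M_k` (with `M_0 = ∅`). -/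
def Mk (k : ℕ) : Set ℕ :=
  {n | 1 ≤ k ∧ ∃ i j : ℕ, k ≤ j ∧ j ≤ 2 * k - 1 ∧ n = i * (3 * k - 1) + j}

/-!
The limit `L` of the iterates `M, M★, M★★, …` is a fixed point of `★`: whether `x` is a
P-position only depends on the moves below `x`, and these stabilise after finitely many steps.
If `0 ∈ M`, every position is drawn, so `M★ = ∅` and `L = ∅`; this case is recognised by
`min M = {0}`. Otherwise `★` preserves minimal elements (a minimal move is a P-position, since its
only option `0` is terminal, and every P-position lies above some move), hence `min L = min M`.
Finally, a fixed point `L` of `★` is determined by `min L`, by induction on positions: the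
P-status of `x` in the game `L` depends only on `L` strictly below `x` and on whether some
element of `min L` lies below `x`.
-/
section MinSet

variable {α : Type*} [PartialOrder α]

theorem mem_minSet_iff_minimal {S : Set α} {a : α} : a ∈ minSet S ↔ Minimal (· ∈ S) a := by
  rw [minimal_iff]
  exact and_congr_right fun _ => forall₂_congr fun _ _ => forall_congr' fun _ => eq_comm

theorem exists_mem_minSet_le [WellFoundedLT α] {S : Set α} {s : α} (hs : s ∈ S) :
    ∃ a ∈ minSet S, a ≤ s := by
  obtain ⟨a, has, ha⟩ := exists_minimal_le_of_wellFoundedLT (· ∈ S) s hs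
  exact ⟨a, mem_minSet_iff_minimal.mpr ha, has⟩

theorem exists_mem_le_iff_exists_mem_minSet_le [WellFoundedLT α] {S : Set α} {x : α} :
    (∃ m ∈ S, m ≤ x) ↔ ∃ a ∈ minSet S, a ≤ x := by
  refine ⟨fun ⟨m, hm, hmx⟩ => ?_, fun ⟨a, ha, hax⟩ => ⟨a, ha.1, hax⟩⟩
  obtain ⟨a, ha, ham⟩ := exists_mem_minSet_le hm
  exact ⟨a, ha, ham.trans hmx⟩

theorem minSet_eq_of_minSet_subset_of_forall_exists_le {S L : Set α} (hsub : minSet S ⊆ L)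
    (hle : ∀ x ∈ L, ∃ a ∈ minSet S, a ≤ x) : minSet L = minSet S := by
  ext p
  constructor
  · rintro ⟨hpL, hpmin⟩
    obtain ⟨a, ha, hap⟩ := hle p hpL
    rwa [← hpmin a (hsub ha) hap]
  · intro hp
    refine ⟨hsub hp, fun q hqL hqp => ?_⟩
    obtain ⟨a, ha, haq⟩ := hle q hqL
    have hap : a = p := hp.2 a ha.1 (haq.trans hqp)
    exact hqp.antisymm (hap ▸ haq)

end MinSet

section Game

variable {α : Type*} [PartialOrder α] [Sub α] {S S' : Set α}

theorem terminal_congr {y : α} (h : ∀ z ≤ y, z ∈ S ↔ z ∈ S') :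
    Terminal S y ↔ Terminal S' y :=
  forall_congr' fun m => ⟨fun hm hmS' hmy => hm ((h m hmy).mpr hmS') hmy,
    fun hm hmS hmy => hm ((h m hmy).mp hmS) hmy⟩

variable [WellFoundedLT α]

theorem isP_iff (x : α) :
    IsP S x ↔ (∃ m ∈ S, m ≤ x) ∧ ∀ m ∈ S, m ≤ x →
      (Terminal S (x - m) ∨
        ∃ m' ∈ S, m' ≤ x - m ∧ ∃ _ : x - m - m' < x, IsP S (x - m - m')) := by
  rw [IsP, WellFounded.fix_eq]

theorem pset_empty : Pset (∅ : Set α) = ∅ :=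
  Set.eq_empty_of_forall_notMem fun x hx => ((isP_iff x).mp hx).1.elim fun _ h => h.1

end Game

section CanonicallyOrdered

variable {α : Type*} [AddCommMonoid α] [PartialOrder α] [CanonicallyOrderedAdd α]
  {S S' M L K : Set α}

theorem minSet_eq_singleton_zero (h0 : (0 : α) ∈ S) : minSet S = {0} := by
  ext a
  refine ⟨fun ha => (ha.2 0 h0 zero_le).symm, ?_⟩
  rintro rfl
  exact ⟨h0, fun _ _ h => le_zero_iff.mp h⟩

theorem zero_mem_minSet_iff : (0 : α) ∈ minSet S ↔ (0 : α) ∈ S :=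
  ⟨fun h => h.1, fun h => (minSet_eq_singleton_zero h).symm ▸ Set.mem_singleton 0⟩

variable [Sub α]

theorem terminal_zero_iff : Terminal S 0 ↔ (0 : α) ∉ S :=
  ⟨fun h h0 => h 0 h0 le_rfl, fun h _ hm hm0 => h (le_zero_iff.mp hm0 ▸ hm)⟩

variable [OrderedSub α] [WellFoundedLT α]

theorem isP_congr {x : α} (h : ∀ y ≤ x, y ∈ S ↔ y ∈ S') : IsP S x ↔ IsP S' x := by
  induction x using WellFoundedLT.induction with
  | _ x ih =>
    rw [isP_iff, isP_iff]
    refine and_congr (exists_congr fun m => and_congr_left fun hmx => h m hmx)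
      (forall_congr' fun m => ?_)
    have hxm : ∀ z ≤ x - m, z ∈ S ↔ z ∈ S' := fun z hz => h z (hz.trans tsub_le_self)
    have hopt : (∃ m' ∈ S, m' ≤ x - m ∧ ∃ _ : x - m - m' < x, IsP S (x - m - m')) ↔
        ∃ m' ∈ S', m' ≤ x - m ∧ ∃ _ : x - m - m' < x, IsP S' (x - m - m') := by
      refine exists_congr fun m' => ?_
      rw [and_congr_left fun hm' => hxm m' hm'.1]
      exact and_congr_right' (and_congr_right' (exists_congr fun hlt =>
        ih _ hlt fun z hz => h z (hz.trans (tsub_le_self.trans tsub_le_self))))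
    rw [terminal_congr hxm, hopt]
    exact ⟨fun H hm hmx => H ((h m hmx).mpr hm) hmx, fun H hm hmx => H ((h m hmx).mp hm) hmx⟩

theorem isN_congr {y : α} (h : ∀ z ≤ y, z ∈ S ↔ z ∈ S') : IsN S y ↔ IsN S' y := by
  rw [IsN, IsN, terminal_congr h]
  refine or_congr_right (exists_congr fun m => ?_)
  rw [isP_congr fun z hz => h z (hz.trans tsub_le_self)]
  exact and_congr_left fun hm => h m hm.1

theorem zero_notMem_pset (S : Set α) : (0 : α) ∉ Pset S := by
  intro hP
  obtain ⟨⟨m, hm, hm0⟩, hopt⟩ := (isP_iff 0).mp hP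
  rw [le_zero_iff] at hm0
  subst hm0
  rcases hopt 0 hm le_rfl with hT | ⟨_, _, _, hlt, _⟩
  · rw [tsub_self] at hT
    exact terminal_zero_iff.mp hT hm
  · exact not_lt_zero hlt

theorem pset_eq_empty_of_zero_mem (h0 : (0 : α) ∈ S) : Pset S = ∅ := by
  refine Set.eq_empty_of_forall_notMem fun x => ?_
  induction x using WellFoundedLT.induction with
  | _ x ih =>
    intro hx
    obtain ⟨⟨m, hm, hmx⟩, hopt⟩ := (isP_iff x).mp hx
    rcases hopt 0 h0 zero_le with hT | ⟨_, _, _, hlt, hP⟩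
    · exact hT m hm (by rwa [tsub_zero])
    · exact ih _ hlt hP

theorem mem_pset_of_mem_minSet (h0 : (0 : α) ∉ S) {a : α} (ha : a ∈ minSet S) :
    a ∈ Pset S := by
  refine (isP_iff a).mpr ⟨⟨a, ha.1, le_rfl⟩, fun m hm hma => Or.inl ?_⟩
  rw [ha.2 m hm hma, tsub_self]
  exact terminal_zero_iff.mpr h0

theorem minSet_pset (h0 : (0 : α) ∉ S) : minSet (Pset S) = minSet S :=
  minSet_eq_of_minSet_subset_of_forall_exists_le (fun _ => mem_pset_of_mem_minSet h0)
    fun x hx => exists_mem_le_iff_exists_mem_minSet_le.mp ((isP_iff x).mp hx).1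

theorem minSet_iterate_pset (h0 : (0 : α) ∉ S) (n : ℕ) : minSet (Pset^[n] S) = minSet S := by
  induction n generalizing S with
  | zero => rfl
  | succ n ih => rw [Function.iterate_succ_apply, ih (zero_notMem_pset S), minSet_pset h0]

theorem pset_eq_self_of_limitsTo [LocallyFiniteOrderBot α] (hL : LimitsTo M L) : Pset L = L := by
  ext x
  have hev : ∀ y, ∀ᶠ i in Filter.atTop, (y ∈ Pset^[i] M ↔ y ∈ L) :=
    fun y => Filter.eventually_atTop.mpr (hL y)
  obtain ⟨i, hbelow, hx⟩ := (((Set.finite_Iic x).eventually_all.mpr fun y _ => hev y).and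
    ((Filter.tendsto_add_atTop_nat 1).eventually (hev x))).exists
  rw [← hx, Function.iterate_succ_apply']
  exact isP_congr fun y hy => (hbelow y hy).symm

theorem minSet_eq_of_limitsTo (hL : LimitsTo M L) (h0 : (0 : α) ∉ M) : minSet L = minSet M := by
  refine minSet_eq_of_minSet_subset_of_forall_exists_le (fun a ha => ?_) fun x hx => ?_
  · obtain ⟨N, hN⟩ := hL a
    rw [← minSet_iterate_pset h0 N] at ha
    exact (hN N le_rfl).mp ha.1
  · obtain ⟨N, hN⟩ := hL x
    rw [← minSet_iterate_pset h0 N]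
    exact exists_mem_minSet_le ((hN N le_rfl).mpr hx)

theorem eq_empty_of_limitsTo_of_zero_mem (hL : LimitsTo M L) (h0 : (0 : α) ∈ M) : L = ∅ := by
  have hiter : ∀ n, Pset^[n + 1] M = ∅ := fun n => by
    rw [Function.iterate_succ_apply, pset_eq_empty_of_zero_mem h0,
      Function.iterate_fixed pset_empty]
  refine Set.eq_empty_of_forall_notMem fun x hx => ?_
  obtain ⟨N, hN⟩ := hL x
  have hxN := (hN (N + 1) N.le_succ).mpr hx
  rw [hiter] at hxN
  exact hxN

theorem zero_mem_iff_eq_empty_of_limitsTo (hM : M.Nonempty) (hL : LimitsTo M L) :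
    (0 : α) ∈ M ↔ L = ∅ := by
  refine ⟨eq_empty_of_limitsTo_of_zero_mem hL, fun hL0 => ?_⟩
  by_contra h0
  obtain ⟨s, hs⟩ := hM
  obtain ⟨a, ha, -⟩ := exists_mem_minSet_le hs
  rw [← minSet_eq_of_limitsTo hL h0, hL0] at ha
  exact ha.1

variable [AddLeftReflectLE α]

/-- Without the move `0`, a move `m = x` leads to the terminal position `0`, so only the moves
`m < x` constrain `x`; and the well-foundedness guard in `IsP` holds automatically. -/
theorem isP_iff_of_zero_notMem (h0 : (0 : α) ∉ S) (x : α) :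
    IsP S x ↔ (∃ m ∈ S, m ≤ x) ∧ ∀ m < x, m ∈ S → IsN S (x - m) := by
  rw [isP_iff]
  refine and_congr_right' ⟨fun H m hmx hm => ?_, fun H m hm hmx => ?_⟩
  · rcases H m hm hmx.le with hT | ⟨m', hm', hle, -, hP⟩
    exacts [Or.inl hT, Or.inr ⟨m', hm', hle, hP⟩]
  rcases hmx.lt_or_eq with hlt | rfl
  · rcases H m hlt hm with hT | ⟨m', hm', hle, hP⟩
    · exact Or.inl hT
    have hm'pos : 0 < m' := pos_iff_ne_zero.mpr (ne_of_mem_of_not_mem hm' h0)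
    exact Or.inr ⟨m', hm', hle,
      ((tsub_lt_tsub_left_of_le hle hm'pos).trans_eq (tsub_zero _)).trans_le tsub_le_self, hP⟩
  · rw [tsub_self]
    exact Or.inl (terminal_zero_iff.mpr h0)

theorem isP_congr_of_forall_lt (h0 : (0 : α) ∉ S) (h0' : (0 : α) ∉ S') {x : α}
    (hlt : ∀ y < x, y ∈ S ↔ y ∈ S')
    (hex : (∃ m ∈ S, m ≤ x) ↔ ∃ m ∈ S', m ≤ x) :
    IsP S x ↔ IsP S' x := by
  rw [isP_iff_of_zero_notMem h0, isP_iff_of_zero_notMem h0']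
  refine and_congr hex (forall₂_congr fun m hmx => ?_)
  rw [hlt m hmx]
  refine imp_congr_right fun hm => isN_congr fun z hz => hlt z (hz.trans_lt ?_)
  have hmpos : 0 < m := pos_iff_ne_zero.mpr (ne_of_mem_of_not_mem hm h0')
  exact (tsub_lt_tsub_left_of_le hmx.le hmpos).trans_eq (tsub_zero x)

theorem eq_of_pset_eq_self_of_minSet_eq (hL : Pset L = L) (hK : Pset K = K)
    (hmin : minSet L = minSet K) : L = K := by
  have h0L : (0 : α) ∉ L := hL ▸ zero_notMem_pset L
  have h0K : (0 : α) ∉ K := hK ▸ zero_notMem_pset K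
  ext x
  induction x using WellFoundedLT.induction with
  | _ x ih =>
    rw [← hL, ← hK]
    exact isP_congr_of_forall_lt h0L h0K ih (by
      rw [exists_mem_le_iff_exists_mem_minSet_le, hmin, ← exists_mem_le_iff_exists_mem_minSet_le])

end CanonicallyOrdered

theorem limit_eq_iff_minSet_eq {d : ℕ} (M G : Set (Fin d → ℕ))
    (hM : M.Nonempty) (hG : G.Nonempty) (LM LG : Set (Fin d → ℕ))
    (hLM : LimitsTo M LM) (hLG : LimitsTo G LG) :
    LM = LG ↔ minSet M = minSet G := by
  constructor
  · rintro rfl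
    have h0 : (0 : Fin d → ℕ) ∈ M ↔ 0 ∈ G :=
      (zero_mem_iff_eq_empty_of_limitsTo hM hLM).trans
        (zero_mem_iff_eq_empty_of_limitsTo hG hLG).symm
    by_cases h0M : (0 : Fin d → ℕ) ∈ M
    · rw [minSet_eq_singleton_zero h0M, minSet_eq_singleton_zero (h0.mp h0M)]
    · rw [← minSet_eq_of_limitsTo hLM h0M, ← minSet_eq_of_limitsTo hLG (h0.not.mp h0M)]
  · intro hmin
    have h0 : (0 : Fin d → ℕ) ∈ M ↔ 0 ∈ G := by
      rw [← zero_mem_minSet_iff, hmin, zero_mem_minSet_iff]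
    by_cases h0M : (0 : Fin d → ℕ) ∈ M
    · rw [eq_empty_of_limitsTo_of_zero_mem hLM h0M,
        eq_empty_of_limitsTo_of_zero_mem hLG (h0.mp h0M)]
    · refine eq_of_pset_eq_self_of_minSet_eq (pset_eq_self_of_limitsTo hLM)
        (pset_eq_self_of_limitsTo hLG) ?_
      rw [minSet_eq_of_limitsTo hLM h0M, minSet_eq_of_limitsTo hLG (h0.not.mp h0M), hmin]
end

section
/- Let M ⊆ ℕ₀ be any one-dimensional move set, and let k = min(M) if M ≠ ∅ and k = 0 otherwise. Then the iterates of the misère ★-operator converge to M_k: lim_{i→∞} M^i = M_k, where M_0 = ∅ and M_k = {i(3k−1) + j : i ∈ ℕ₀, k ≤ j ≤ 2k−1} for k ≥ 1. -/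
lemma isP_def (M : Set ℕ) (x : ℕ) : IsP M x ↔
    (∃ m ∈ M, m ≤ x) ∧ ∀ m ∈ M, m ≤ x →
      (Terminal M (x - m) ∨
        ∃ m' ∈ M, m' ≤ x - m ∧ ∃ _h : x - m - m' < x, IsP M (x - m - m')) := by
  unfold IsP
  rw [WellFounded.fix_eq]
-- congruence lemmas
lemma terminal_congr_s11 {M M' : Set ℕ} {x : ℕ} (h : ∀ m ≤ x, (m ∈ M ↔ m ∈ M')) :
    Terminal M x ↔ Terminal M' x := by
  constructor
  · intro ht m hm hmx; exact ht m ((h m hmx).2 hm) hmx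
  · intro ht m hm hmx; exact ht m ((h m hmx).1 hm) hmx

lemma isP_of_agree : ∀ x : ℕ, ∀ {M M' : Set ℕ}, (∀ m ≤ x, (m ∈ M ↔ m ∈ M')) →
    IsP M x → IsP M' x := by
  intro x
  induction x using Nat.strong_induction_on with
  | _ x ih =>
    intro M M' h hp
    rw [isP_def] at hp ⊢
    obtain ⟨⟨m0, hm0, hm0x⟩, h2⟩ := hp
    refine ⟨⟨m0, (h m0 hm0x).1 hm0, hm0x⟩, ?_⟩
    intro m hm hmx
    rcases h2 m ((h m hmx).2 hm) hmx with ht | ⟨m', hm', hm'x, hlt, hp'⟩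
    · left
      exact (terminal_congr_s11 (fun n hn => h n (le_trans hn (Nat.sub_le x m)))).1 ht
    · right
      exact ⟨m', (h m' (le_trans hm'x (Nat.sub_le x m))).1 hm', hm'x, hlt,
        ih _ hlt (fun n hn => h n (le_trans hn (le_of_lt hlt))) hp'⟩

lemma isP_agree_iff {M M' : Set ℕ} {x : ℕ} (h : ∀ m ≤ x, (m ∈ M ↔ m ∈ M')) :
    IsP M x ↔ IsP M' x :=
  ⟨isP_of_agree x h, isP_of_agree x (fun m hm => (h m hm).symm)⟩

lemma isN_agree_iff {M M' : Set ℕ} {x : ℕ} (h : ∀ m ≤ x, (m ∈ M ↔ m ∈ M')) :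
    IsN M x ↔ IsN M' x := by
  unfold IsN
  refine or_congr (terminal_congr_s11 h) ?_
  constructor
  · rintro ⟨m, hm, hmx, hp⟩
    exact ⟨m, (h m hmx).1 hm, hmx,
      isP_of_agree _ (fun m' hm' => h m' (le_trans hm' (Nat.sub_le x m))) hp⟩
  · rintro ⟨m, hm, hmx, hp⟩
    exact ⟨m, (h m hmx).2 hm, hmx,
      isP_of_agree _ (fun m' hm' => (h m' (le_trans hm' (Nat.sub_le x m))).symm) hp⟩

lemma isP_iff' {M : Set ℕ} (hM : (0:ℕ) ∉ M) (x : ℕ) :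
    IsP M x ↔ (∃ m ∈ M, m ≤ x) ∧ ∀ m ∈ M, m ≤ x → IsN M (x - m) := by
  rw [isP_def]
  refine and_congr_right fun _ => ?_
  refine forall_congr' fun m => ?_
  refine imp_congr_right fun hm => ?_
  refine imp_congr_right fun hmx => ?_
  unfold IsN
  refine or_congr_right ?_
  constructor
  · rintro ⟨m', h1, h2, _, h4⟩; exact ⟨m', h1, h2, h4⟩
  · rintro ⟨m', h1, h2, h4⟩
    have hm1 : 1 ≤ m := by
      rcases Nat.eq_zero_or_pos m with rfl | h
      · exact absurd hm hM
      · exact h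
    exact ⟨m', h1, h2, by omega, h4⟩
-- Mk arithmetic
lemma Mk_le {k n : ℕ} (hn : n ∈ Mk k) : k ≤ n := by
  obtain ⟨hk, i, j, h1, h2, rfl⟩ := hn; omega

lemma k_mem_Mk {k : ℕ} (hk : 1 ≤ k) : k ∈ Mk k :=
  ⟨hk, 0, k, le_rfl, by omega, by omega⟩

lemma k2_mem_Mk {k : ℕ} (hk : 1 ≤ k) : 2*k-1 ∈ Mk k :=
  ⟨hk, 0, 2*k-1, by omega, le_rfl, by omega⟩

lemma mem_Mk_iff {k : ℕ} (hk : 1 ≤ k) {n : ℕ} :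
    n ∈ Mk k ↔ k ≤ n % (3*k-1) ∧ n % (3*k-1) ≤ 2*k-1 := by
  constructor
  · rintro ⟨-, i, j, h1, h2, rfl⟩
    have : (i * (3*k-1) + j) % (3*k-1) = j := by
      rw [Nat.mul_comm, Nat.mul_add_mod, Nat.mod_eq_of_lt (by omega)]
    omega
  · rintro ⟨h1, h2⟩
    refine ⟨hk, n / (3*k-1), n % (3*k-1), h1, h2, ?_⟩
    rw [Nat.mul_comm, Nat.div_add_mod]

lemma terminal_Mk {k x : ℕ} (hk : 1 ≤ k) : Terminal (Mk k) x ↔ x < k := by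
  constructor
  · intro h
    by_contra hx
    push_neg at hx
    exact h k (k_mem_Mk hk) hx
  · intro h m hm hmx
    have := Mk_le hm; omega

lemma mod_shift {p x m : ℕ} (hp : 0 < p) (hm : m ≤ x) :
    (x - m) % p + m % p = x % p ∨ (x - m) % p + m % p = x % p + p := by
  have h1 : ((x - m) % p + m % p) % p = x % p := by
    rw [← Nat.add_mod, Nat.sub_add_cancel hm]
  have h2 : (x - m) % p < p := Nat.mod_lt _ hp
  have h3 : m % p < p := Nat.mod_lt _ hp
  rcases Nat.lt_or_ge ((x - m) % p + m % p) p with h' | h'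
  · left; rwa [Nat.mod_eq_of_lt h'] at h1
  · right
    rw [Nat.mod_eq_sub_mod h', Nat.mod_eq_of_lt (by omega)] at h1
    omega

lemma optA {k x m : ℕ} (hk : 1 ≤ k) (hx : x ∈ Mk k) (hm : m ∈ Mk k) (hmx : m ≤ x) :
    x - m ∉ Mk k := by
  intro hxm
  rw [mem_Mk_iff hk] at hx hm hxm
  have hp : 0 < 3*k-1 := by omega
  rcases mod_shift hp hmx with h | h <;> omega

lemma optB {k x : ℕ} (hk : 1 ≤ k) (hx : k ≤ x) (hxm : x ∉ Mk k) :
    ∃ m ∈ Mk k, m ≤ x ∧ x - m ∈ Mk k := by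
  have hp : 0 < 3*k-1 := by omega
  rw [mem_Mk_iff hk] at hxm
  push_neg at hxm
  have hr : x % (3*k-1) < 3*k-1 := Nat.mod_lt _ hp
  rcases Nat.lt_or_ge (x % (3*k-1)) k with h | h
  · -- residue < k : use m = 2k-1
    have hxp : 3*k-1 ≤ x := by
      by_contra hc
      push_neg at hc
      rw [Nat.mod_eq_of_lt hc] at h
      omega
    have hmx : 2*k-1 ≤ x := by omega
    refine ⟨2*k-1, k2_mem_Mk hk, hmx, ?_⟩
    rw [mem_Mk_iff hk]
    have hmm : (2*k-1) % (3*k-1) = 2*k-1 := Nat.mod_eq_of_lt (by omega)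
    have ht : (x - (2*k-1)) % (3*k-1) < 3*k-1 := Nat.mod_lt _ hp
    rcases mod_shift hp hmx with h' | h' <;> rw [hmm] at h' <;> omega
  · -- residue ≥ 2k : use m = k
    have h2 : 2*k ≤ x % (3*k-1) := by omega
    refine ⟨k, k_mem_Mk hk, hx, ?_⟩
    rw [mem_Mk_iff hk]
    have hmm : k % (3*k-1) = k := Nat.mod_eq_of_lt (by omega)
    have ht : (x - k) % (3*k-1) < 3*k-1 := Nat.mod_lt _ hp
    rcases mod_shift hp hx with h' | h' <;> rw [hmm] at h' <;> omega
-- fixed point theorem: P(M_k) = M_k, N(M_k) = complement of M_k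
lemma Mk_fixed {k : ℕ} (hk : 1 ≤ k) :
    ∀ x : ℕ, (IsP (Mk k) x ↔ x ∈ Mk k) ∧ (IsN (Mk k) x ↔ x ∉ Mk k) := by
  have h0 : (0:ℕ) ∉ Mk k := fun h => by have := Mk_le h; omega
  intro x
  induction x using Nat.strong_induction_on with
  | _ x ih =>
    rcases Nat.lt_or_ge x k with hx | hx
    · have hterm : Terminal (Mk k) x := (terminal_Mk hk).2 hx
      have hnm : x ∉ Mk k := fun h => by have := Mk_le h; omega
      refine ⟨iff_of_false ?_ hnm, iff_of_true (Or.inl hterm) hnm⟩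
      intro hp
      rw [isP_iff' h0] at hp
      obtain ⟨⟨m, hm, hmx⟩, -⟩ := hp
      exact hterm m hm hmx
    · by_cases hmem : x ∈ Mk k
      · have hP : IsP (Mk k) x := by
          rw [isP_iff' h0]
          refine ⟨⟨k, k_mem_Mk hk, hx⟩, ?_⟩
          intro m hm hmx
          have hlt : x - m < x := by have := Mk_le hm; omega
          exact (ih _ hlt).2.2 (optA hk hmem hm hmx)
        have hnotN : ¬ IsN (Mk k) x := by
          rintro (hterm | ⟨m, hm, hmx, hp⟩)
          · have := (terminal_Mk hk).1 hterm; omega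
          · have hlt : x - m < x := by have := Mk_le hm; omega
            exact optA hk hmem hm hmx ((ih _ hlt).1.1 hp)
        exact ⟨iff_of_true hP hmem, iff_of_false hnotN (not_not_intro hmem)⟩
      · obtain ⟨m, hm, hmx, hxm⟩ := optB hk hx hmem
        have hlt : x - m < x := by have := Mk_le hm; omega
        have hN : IsN (Mk k) x := Or.inr ⟨m, hm, hmx, (ih _ hlt).1.2 hxm⟩
        have hnotP : ¬ IsP (Mk k) x := by
          intro hp
          rw [isP_iff' h0] at hp
          exact (ih _ hlt).2.1 (hp.2 m hm hmx) hxm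
        exact ⟨iff_of_false hnotP hmem, iff_of_true hN hmem⟩

-- one step of the iteration extends the agreement with Mk by k
lemma step_lemma {M : Set ℕ} {k t : ℕ} (hk : 1 ≤ k) (hmin : ∀ m ∈ M, k ≤ m) (hkM : k ∈ M)
    (hkt : k ≤ t) (hag : ∀ n ≤ t, (n ∈ M ↔ n ∈ Mk k)) :
    ∀ n ≤ t + k, (n ∈ Pset M ↔ n ∈ Mk k) := by
  have h0 : (0:ℕ) ∉ M := fun h => by have := hmin 0 h; omega
  have h0' : (0:ℕ) ∉ Mk k := fun h => by have := Mk_le h; omega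
  intro n hn
  rcases le_or_gt n t with hnt | hnt
  · have hiff : IsP M n ↔ IsP (Mk k) n :=
      isP_agree_iff (fun m hm => hag m (le_trans hm hnt))
    rw [Pset, Set.mem_setOf_eq, hiff]
    exact (Mk_fixed hk n).1
  · rw [Pset, Set.mem_setOf_eq, ← (Mk_fixed hk n).1, isP_iff' h0, isP_iff' h0']
    have hex : (∃ m ∈ M, m ≤ n) ↔ (∃ m ∈ Mk k, m ≤ n) :=
      iff_of_true ⟨k, hkM, by omega⟩ ⟨k, k_mem_Mk hk, by omega⟩
    refine and_congr hex (forall_congr' fun m => ?_)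
    constructor
    · intro h hm hmn
      rcases le_or_gt m t with hmt | hmt
      · have hmM : m ∈ M := (hag m hmt).2 hm
        have hsub : n - m ≤ t := by have := Mk_le hm; omega
        exact (isN_agree_iff (fun m' hm' => hag m' (le_trans hm' hsub))).1 (h hmM hmn)
      · left
        intro m' hm' hc
        have := Mk_le hm'
        omega
    · intro h hm hmn
      rcases le_or_gt m t with hmt | hmt
      · have hmMk : m ∈ Mk k := (hag m hmt).1 hm
        have hsub : n - m ≤ t := by have := hmin m hm; omega
        exact (isN_agree_iff (fun m' hm' => hag m' (le_trans hm' hsub))).2 (h hmMk hmn)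
      · left
        intro m' hm' hc
        have := hmin m' hm'
        omega
lemma Pset_empty : Pset (∅ : Set ℕ) = ∅ := by
  ext y
  simp only [Set.mem_empty_iff_false, iff_false, Pset, Set.mem_setOf_eq]
  intro hp
  rw [isP_def] at hp
  obtain ⟨⟨m, hm, -⟩, -⟩ := hp
  exact hm

lemma Mk_zero : Mk 0 = ∅ := by
  ext n
  simp only [Mk, Set.mem_setOf_eq, Set.mem_empty_iff_false, iff_false, not_and]
  intro h; omega

theorem limit_eq_Mk_sInf (M : Set ℕ) : LimitsTo M (Mk (sInf M)) := by
  rcases eq_or_ne M ∅ with rfl | hne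
  · rw [Nat.sInf_empty, Mk_zero]
    intro x
    refine ⟨0, fun i _ => ?_⟩
    have hiter : ∀ j, Pset^[j] (∅ : Set ℕ) = ∅ := by
      intro j
      induction j with
      | zero => rfl
      | succ j ih => rw [Function.iterate_succ_apply', ih, Pset_empty]
    rw [hiter i]
  · have hmem : sInf M ∈ M := Nat.sInf_mem (Set.nonempty_iff_ne_empty.2 hne)
    rcases Nat.eq_zero_or_pos (sInf M) with h0 | hk
    · -- 0 ∈ M : all P-sets are empty
      rw [h0, Mk_zero]
      rw [h0] at hmem
      have hP : ∀ x, ¬ IsP M x := by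
        intro x
        induction x using Nat.strong_induction_on with
        | _ x ih =>
          intro hp
          rw [isP_def] at hp
          rcases hp.2 0 hmem (Nat.zero_le x) with hterm | ⟨m', hm', hm'x, hlt, hp'⟩
          · exact hterm 0 hmem (Nat.zero_le _)
          · exact ih _ hlt hp'
      have hPset : Pset M = ∅ := by
        ext y
        simp only [Set.mem_empty_iff_false, iff_false, Pset, Set.mem_setOf_eq]
        exact hP y
      have hiter : ∀ j, 1 ≤ j → Pset^[j] M = ∅ := by
        intro j hj
        induction j with
        | zero => omega
        | succ j ih =>
          rcases Nat.eq_zero_or_pos j with rfl | hj'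
          · simpa using hPset
          · rw [Function.iterate_succ_apply', ih hj', Pset_empty]
      intro x
      exact ⟨1, fun i hi => by rw [hiter i hi]⟩
    · -- min M = k ≥ 1
      set k := sInf M with hkdef
      have hmin : ∀ m ∈ M, k ≤ m := fun m hm => Nat.sInf_le hm
      have key : ∀ i : ℕ, (∀ n ≤ (i+1)*k, (n ∈ Pset^[i] M ↔ n ∈ Mk k)) ∧
          (∀ m ∈ Pset^[i] M, k ≤ m) ∧ k ∈ Pset^[i] M := by
        intro i
        induction i with
        | zero =>
          refine ⟨?_, hmin, hmem⟩
          intro n hn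
          have hn' : n ≤ k := by omega
          simp only [Function.iterate_zero, id_eq]
          constructor
          · intro hM
            have hnk : n = k := le_antisymm hn' (hmin n hM)
            rw [hnk]; exact k_mem_Mk hk
          · intro hMk
            have hnk : n = k := le_antisymm hn' (Mk_le hMk)
            rw [hnk]; exact hmem
        | succ i ih =>
          obtain ⟨hag, hmin', hkmem'⟩ := ih
          have hkt : k ≤ (i+1)*k := by
            have := Nat.mul_le_mul_right k (show 1 ≤ i+1 by omega)
            simpa using this
          have hag' : ∀ n ≤ (i+1)*k, (n ∈ Pset^[i] M ↔ n ∈ Mk k) := hag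
          have hstep := step_lemma hk hmin' hkmem' hkt hag'
          have heq : (i+1+1)*k = (i+1)*k + k := by ring
          refine ⟨?_, ?_, ?_⟩
          · intro n hn
            rw [Function.iterate_succ_apply']
            exact hstep n (by omega)
          · intro m hm
            rw [Function.iterate_succ_apply', Pset, Set.mem_setOf_eq, isP_def] at hm
            obtain ⟨⟨m0, hm0, hm0x⟩, -⟩ := hm
            exact le_trans (hmin' m0 hm0) hm0x
          · rw [Function.iterate_succ_apply']
            exact (hstep k (by omega)).2 (k_mem_Mk hk)
      intro x
      refine ⟨x, fun i hi => ?_⟩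
      have hle : i + 1 ≤ (i+1)*k := Nat.le_mul_of_pos_right _ hk
      exact (key i).1 x (by omega)
end

section
/- For k ≥ 1, the misère subtraction game with move set A_k = {k, 2k−1} satisfies P(A_k) = M_k, where M_k = {i(3k−1) + j : i ∈ ℕ₀, k ≤ j ≤ 2k−1}. -/
lemma isP_unfold (M : Set ℕ) (x : ℕ) :
    IsP M x ↔ (∃ m ∈ M, m ≤ x) ∧ ∀ m ∈ M, m ≤ x →
      (Terminal M (x - m) ∨
        ∃ m' ∈ M, m' ≤ x - m ∧ ∃ h : x - m - m' < x, IsP M (x - m - m')) := by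
  unfold IsP
  rw [WellFounded.fix_eq]

private lemma mod_helper {D t s z : ℕ} (h : z = D * t + s) (hs : s < D) : z % D = s := by
  subst h; simp [Nat.mul_add_mod, Nat.mod_eq_of_lt hs]

private lemma terminal_iff (k : ℕ) (hk : 1 ≤ k) (y : ℕ) :
    Terminal ({k, 2 * k - 1} : Set ℕ) y ↔ y < k := by
  unfold Terminal
  constructor
  · intro h
    by_contra h'
    exact h k (Set.mem_insert _ _) (by omega)
  · intro h m hm
    simp only [Set.mem_insert_iff, Set.mem_singleton_iff] at hm
    rcases hm with rfl | rfl <;> omega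

private lemma memk (k : ℕ) : k ∈ ({k, 2 * k - 1} : Set ℕ) := Set.mem_insert _ _
private lemma memk2 (k : ℕ) : 2 * k - 1 ∈ ({k, 2 * k - 1} : Set ℕ) :=
  Set.mem_insert_of_mem _ rfl

private lemma key (k : ℕ) (hk : 1 ≤ k) (x : ℕ) :
    IsP ({k, 2 * k - 1} : Set ℕ) x ↔
      (k ≤ x % (3 * k - 1) ∧ x % (3 * k - 1) ≤ 2 * k - 1) := by
  induction x using Nat.strong_induction_on with
  | _ x IH =>
  obtain ⟨q, r, hx, hr⟩ : ∃ q r, x = (3 * k - 1) * q + r ∧ r < 3 * k - 1 :=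
    ⟨x / (3 * k - 1), x % (3 * k - 1), (Nat.div_add_mod x (3 * k - 1)).symm,
      Nat.mod_lt _ (by omega)⟩
  have hxr : x % (3 * k - 1) = r := mod_helper hx hr
  rw [hxr, isP_unfold]
  constructor
  · rintro ⟨⟨m0, hm0, hm0x⟩, hall⟩
    simp only [Set.mem_insert_iff, Set.mem_singleton_iff] at hm0
    have hkx : k ≤ x := by rcases hm0 with h | h <;> omega
    by_contra hcon
    rcases (by omega : r < k ∨ 2 * k - 1 < r) with hrk | hrk
    · -- r < k, so q ≥ 1; use the move 2k-1
      obtain ⟨q', rfl⟩ : ∃ q', q = q' + 1 := by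
        cases q with
        | zero => rw [Nat.mul_zero] at hx; omega
        | succ n => exact ⟨n, rfl⟩
      have hx' : x = (3 * k - 1) * q' + (3 * k - 1) + r := by rw [hx, Nat.mul_succ]
      rcases hall (2 * k - 1) (memk2 k) (by omega) with hterm | ⟨m', hm', hm'y, hlt, hP⟩
      · rw [terminal_iff k hk] at hterm; omega
      · simp only [Set.mem_insert_iff, Set.mem_singleton_iff] at hm'
        rcases hm' with h | h <;> rw [h] at hP hm'y
        · -- suboption k : lands on (3k-1)q' + r
          rw [IH _ (by omega)] at hP
          have : (x - (2 * k - 1) - k) % (3 * k - 1) = r :=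
            mod_helper (t := q') (by omega) hr
          omega
        · -- suboption 2k-1
          rcases (by omega : r = k - 1 ∨ r + 2 ≤ k) with hre | hre
          · rw [IH _ (by omega)] at hP
            have : (x - (2 * k - 1) - (2 * k - 1)) % (3 * k - 1) = 0 :=
              mod_helper (t := q') (by omega) (by omega)
            omega
          · obtain ⟨q'', rfl⟩ : ∃ q'', q' = q'' + 1 := by
              cases q' with
              | zero => rw [Nat.mul_zero] at hx'; omega
              | succ n => exact ⟨n, rfl⟩
            have hx'' : x = (3 * k - 1) * q'' + (3 * k - 1) + (3 * k - 1) + r := by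
              rw [hx', Nat.mul_succ]
            rw [IH _ (by omega)] at hP
            have : (x - (2 * k - 1) - (2 * k - 1)) % (3 * k - 1) = r + 2 * k :=
              mod_helper (t := q'') (by omega) (by omega)
            omega
    · -- 2k ≤ r ≤ 3k-2 ; use the move k
      rcases hall k (memk k) hkx with hterm | ⟨m', hm', hm'y, hlt, hP⟩
      · rw [terminal_iff k hk] at hterm; omega
      · simp only [Set.mem_insert_iff, Set.mem_singleton_iff] at hm'
        rcases hm' with h | h <;> rw [h] at hP hm'y
        · rw [IH _ (by omega)] at hP
          have : (x - k - k) % (3 * k - 1) = r - 2 * k :=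
            mod_helper (t := q) (by omega) (by omega)
          omega
        · obtain ⟨q', rfl⟩ : ∃ q', q = q' + 1 := by
            cases q with
            | zero => rw [Nat.mul_zero] at hx; omega
            | succ n => exact ⟨n, rfl⟩
          have hx' : x = (3 * k - 1) * q' + (3 * k - 1) + r := by rw [hx, Nat.mul_succ]
          rw [IH _ (by omega)] at hP
          have : (x - k - (2 * k - 1)) % (3 * k - 1) = r :=
            mod_helper (t := q') (by omega) hr
          omega
  · rintro ⟨h1, h2⟩
    refine ⟨⟨k, memk k, by omega⟩, ?_⟩
    intro m hm hmx
    simp only [Set.mem_insert_iff, Set.mem_singleton_iff] at hm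
    rcases hm with h | h <;> rw [h] at hmx ⊢
    · -- move k
      cases q with
      | zero =>
        rw [Nat.mul_zero] at hx
        left; rw [terminal_iff k hk]; omega
      | succ q' =>
        have hx' : x = (3 * k - 1) * q' + (3 * k - 1) + r := by rw [hx, Nat.mul_succ]
        right
        refine ⟨2 * k - 1, memk2 k, by omega, by omega, ?_⟩
        rw [IH _ (by omega)]
        have : (x - k - (2 * k - 1)) % (3 * k - 1) = r :=
          mod_helper (t := q') (by omega) hr
        omega
    · -- move 2k-1
      rcases (by omega : r = 2 * k - 1 ∨ r + 1 ≤ 2 * k - 1) with hre | hre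
      · cases q with
        | zero =>
          rw [Nat.mul_zero] at hx
          left; rw [terminal_iff k hk]; omega
        | succ q' =>
          have hx' : x = (3 * k - 1) * q' + (3 * k - 1) + r := by rw [hx, Nat.mul_succ]
          right
          refine ⟨k, memk k, by omega, by omega, ?_⟩
          rw [IH _ (by omega)]
          have : (x - (2 * k - 1) - k) % (3 * k - 1) = 2 * k - 1 :=
            mod_helper (t := q') (by omega) (by omega)
          omega
      · obtain ⟨q', rfl⟩ : ∃ q', q = q' + 1 := by
          cases q with
          | zero => rw [Nat.mul_zero] at hx; omega
          | succ n => exact ⟨n, rfl⟩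
        have hx' : x = (3 * k - 1) * q' + (3 * k - 1) + r := by rw [hx, Nat.mul_succ]
        right
        refine ⟨k, memk k, by omega, by omega, ?_⟩
        rw [IH _ (by omega)]
        have : (x - (2 * k - 1) - k) % (3 * k - 1) = r :=
          mod_helper (t := q') (by omega) hr
        omega

theorem Pset_Ak (k : ℕ) (hk : 1 ≤ k) :
    Pset ({k, 2 * k - 1} : Set ℕ) = Mk k := by
  ext x
  simp only [Pset, Set.mem_setOf_eq, Mk, key k hk x]
  constructor
  · rintro ⟨h1, h2⟩
    exact ⟨hk, x / (3 * k - 1), x % (3 * k - 1), h1, h2,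
      by rw [Nat.mul_comm]; exact (Nat.div_add_mod x (3 * k - 1)).symm⟩
  · rintro ⟨-, i, j, hj1, hj2, rfl⟩
    have : (i * (3 * k - 1) + j) % (3 * k - 1) = j :=
      mod_helper (t := i) (by rw [Nat.mul_comm]) (by omega)
    omega
end
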